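/- For a bounded linear operator T on a complex Banach space, if E_a(T) ⊆ σ(T)\σ_bf(T), then E_a^0(T) ⊆ σ(T)\σ_e(T). -/

import Mathlib

/-!
If `T - λ` is B-Fredholm, then for some `n` the space `R((T-λ)^n) / R((T-λ)^(n+1))` is finite
dimensional. Applying `(T-λ)^n` gives a surjection of `X / R(T-λ)` onto it whose kernel is the image
of `ker (T-λ)^n`, and that kernel is finite dimensional once `ker (T-λ)` is. So for `λ ∈ E_a⁰(T)`,
the hypothesis makes `T - λ` B-Fredholm with finite-dimensional kernel and finite codimensional
range, and a range of finite codimension is closed by the open mapping theorem.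
-/

open Filter Topology

variable {X : Type*} [NormedAddCommGroup X] [NormedSpace ℂ X] [CompleteSpace X]

/-- `S` is a Fredholm operator. -/
def IsFredholm (S : X →L[ℂ] X) : Prop :=
  FiniteDimensional ℂ (LinearMap.ker (S : X →ₗ[ℂ] X)) ∧
  IsClosed ((LinearMap.range (S : X →ₗ[ℂ] X) : Submodule ℂ X) : Set X) ∧
  FiniteDimensional ℂ (X ⧸ LinearMap.range (S : X →ₗ[ℂ] X))

/-- `S` is a Weyl operator: Fredholm of index zero. -/
def IsWeyl (S : X →L[ℂ] X) : Prop :=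
  IsFredholm S ∧
  Module.finrank ℂ (LinearMap.ker (S : X →ₗ[ℂ] X)) = Module.finrank ℂ (X ⧸ LinearMap.range (S : X →ₗ[ℂ] X))

/-- `S` is a B-Fredholm operator: for some `n`, `R(S^n)` is closed and the restriction
`S_[n] : R(S^n) → R(S^n)` is Fredholm (its kernel is `ker S ⊓ R(S^n)`, its range is
`R(S^(n+1))`). -/
def IsBFredholm (S : X →L[ℂ] X) : Prop :=
  ∃ n : ℕ, IsClosed ((LinearMap.range (↑(S ^ n) : X →ₗ[ℂ] X) : Submodule ℂ X) : Set X) ∧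
    IsClosed ((LinearMap.range (↑(S ^ (n + 1)) : X →ₗ[ℂ] X) : Submodule ℂ X) : Set X) ∧
    FiniteDimensional ℂ ↥(LinearMap.ker (S : X →ₗ[ℂ] X) ⊓ LinearMap.range (↑(S ^ n) : X →ₗ[ℂ] X)) ∧
    FiniteDimensional ℂ (↥(LinearMap.range (↑(S ^ n) : X →ₗ[ℂ] X)) ⧸
      Submodule.comap (LinearMap.range (↑(S ^ n) : X →ₗ[ℂ] X)).subtype (LinearMap.range (↑(S ^ (n + 1)) : X →ₗ[ℂ] X)))

/-- `S` is a B-Weyl operator: B-Fredholm of index zero. -/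
def IsBWeyl (S : X →L[ℂ] X) : Prop :=
  ∃ n : ℕ, IsClosed ((LinearMap.range (↑(S ^ n) : X →ₗ[ℂ] X) : Submodule ℂ X) : Set X) ∧
    IsClosed ((LinearMap.range (↑(S ^ (n + 1)) : X →ₗ[ℂ] X) : Submodule ℂ X) : Set X) ∧
    FiniteDimensional ℂ ↥(LinearMap.ker (S : X →ₗ[ℂ] X) ⊓ LinearMap.range (↑(S ^ n) : X →ₗ[ℂ] X)) ∧
    FiniteDimensional ℂ (↥(LinearMap.range (↑(S ^ n) : X →ₗ[ℂ] X)) ⧸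
      Submodule.comap (LinearMap.range (↑(S ^ n) : X →ₗ[ℂ] X)).subtype (LinearMap.range (↑(S ^ (n + 1)) : X →ₗ[ℂ] X))) ∧
    Module.finrank ℂ ↥(LinearMap.ker (S : X →ₗ[ℂ] X) ⊓ LinearMap.range (↑(S ^ n) : X →ₗ[ℂ] X)) =
      Module.finrank ℂ (↥(LinearMap.range (↑(S ^ n) : X →ₗ[ℂ] X)) ⧸
        Submodule.comap (LinearMap.range (↑(S ^ n) : X →ₗ[ℂ] X)).subtype (LinearMap.range (↑(S ^ (n + 1)) : X →ₗ[ℂ] X)))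

/-- `S` has finite ascent. -/
def HasFiniteAscent (S : X →L[ℂ] X) : Prop :=
  ∃ n : ℕ, LinearMap.ker (↑(S ^ n) : X →ₗ[ℂ] X) = LinearMap.ker (↑(S ^ (n + 1)) : X →ₗ[ℂ] X)

/-- `S` has finite descent. -/
def HasFiniteDescent (S : X →L[ℂ] X) : Prop :=
  ∃ n : ℕ, LinearMap.range (↑(S ^ n) : X →ₗ[ℂ] X) = LinearMap.range (↑(S ^ (n + 1)) : X →ₗ[ℂ] X)

/-- The approximate point spectrum of `T`: points `λ` where `T - λ` is not bounded below. -/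
def sigma_a (T : X →L[ℂ] X) : Set ℂ :=
  {l : ℂ | ¬ ∃ c > (0 : ℝ), ∀ x : X, c * ‖x‖ ≤ ‖(T - l • 1) x‖}

/-- The essential spectrum of `T`. -/
def sigma_e (T : X →L[ℂ] X) : Set ℂ := {l : ℂ | ¬ IsFredholm (T - l • 1)}

/-- The Weyl spectrum of `T`. -/
def sigma_w (T : X →L[ℂ] X) : Set ℂ := {l : ℂ | ¬ IsWeyl (T - l • 1)}

/-- The B-Fredholm spectrum of `T`. -/
def sigma_bf (T : X →L[ℂ] X) : Set ℂ := {l : ℂ | ¬ IsBFredholm (T - l • 1)}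

/-- The B-Weyl spectrum of `T`. -/
def sigma_bw (T : X →L[ℂ] X) : Set ℂ := {l : ℂ | ¬ IsBWeyl (T - l • 1)}

/-- The poles of the resolvent of `T`: spectral points with finite ascent and descent. -/
def poles (T : X →L[ℂ] X) : Set ℂ :=
  {l : ℂ | l ∈ spectrum ℂ T ∧ HasFiniteAscent (T - l • 1) ∧ HasFiniteDescent (T - l • 1)}

/-- The poles of `T` of finite rank. -/
def poles0 (T : X →L[ℂ] X) : Set ℂ :=
  {l : ℂ | l ∈ poles T ∧ FiniteDimensional ℂ (LinearMap.ker (↑(T - l • 1) : X →ₗ[ℂ] X))}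

/-- The left poles of `T`: points `λ ∈ σ_a(T)` with `p = p(T-λ) < ∞` and `R((T-λ)^(p+1))`
closed. -/
def leftPoles (T : X →L[ℂ] X) : Set ℂ :=
  {l : ℂ | l ∈ sigma_a T ∧ ∃ p : ℕ,
    LinearMap.ker (↑((T - l • 1) ^ p) : X →ₗ[ℂ] X) = LinearMap.ker (↑((T - l • 1) ^ (p + 1)) : X →ₗ[ℂ] X) ∧
    (∀ m : ℕ, m < p → LinearMap.ker (↑((T - l • 1) ^ m) : X →ₗ[ℂ] X) ≠ LinearMap.ker (↑((T - l • 1) ^ (m + 1)) : X →ₗ[ℂ] X)) ∧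
    IsClosed ((LinearMap.range (↑((T - l • 1) ^ (p + 1)) : X →ₗ[ℂ] X) : Submodule ℂ X) : Set X)}

/-- The left poles of `T` of finite rank. -/
def leftPoles0 (T : X →L[ℂ] X) : Set ℂ :=
  {l : ℂ | l ∈ leftPoles T ∧ FiniteDimensional ℂ (LinearMap.ker (↑(T - l • 1) : X →ₗ[ℂ] X))}

/-- The isolated points of a subset of `ℂ`. -/
def isoPts (A : Set ℂ) : Set ℂ := {l : ℂ | l ∈ A ∧ ¬ AccPt l (𝓟 A)}

/-- `E(T)`: isolated spectral points that are eigenvalues. -/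
def Eset (T : X →L[ℂ] X) : Set ℂ :=
  {l : ℂ | l ∈ isoPts (spectrum ℂ T) ∧ LinearMap.ker (↑(T - l • 1) : X →ₗ[ℂ] X) ≠ ⊥}

/-- `E⁰(T)`: isolated spectral points that are eigenvalues of finite multiplicity. -/
def Eset0 (T : X →L[ℂ] X) : Set ℂ :=
  {l : ℂ | l ∈ isoPts (spectrum ℂ T) ∧ LinearMap.ker (↑(T - l • 1) : X →ₗ[ℂ] X) ≠ ⊥ ∧
    FiniteDimensional ℂ (LinearMap.ker (↑(T - l • 1) : X →ₗ[ℂ] X))}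

/-- `E_a(T)`: isolated points of the approximate point spectrum that are eigenvalues. -/
def Ea (T : X →L[ℂ] X) : Set ℂ :=
  {l : ℂ | l ∈ isoPts (sigma_a T) ∧ LinearMap.ker (↑(T - l • 1) : X →ₗ[ℂ] X) ≠ ⊥}

/-- `E_a⁰(T)`: isolated points of `σ_a(T)` that are eigenvalues of finite multiplicity. -/
def Ea0 (T : X →L[ℂ] X) : Set ℂ :=
  {l : ℂ | l ∈ isoPts (sigma_a T) ∧ LinearMap.ker (↑(T - l • 1) : X →ₗ[ℂ] X) ≠ ⊥ ∧
    FiniteDimensional ℂ (LinearMap.ker (↑(T - l • 1) : X →ₗ[ℂ] X))}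

section Ring

variable {R M : Type*} [Ring R] [AddCommGroup M] [Module R M]

theorem Module.End.ker_pow_sup_range_eq_comap (f : Module.End R M) (n : ℕ) :
    LinearMap.ker (f ^ n) ⊔ LinearMap.range f =
      (LinearMap.range (f ^ (n + 1))).comap (f ^ n) := by
  refine le_antisymm (sup_le ?_ ?_) ?_
  · intro x hx
    rw [Submodule.mem_comap, LinearMap.mem_ker.mp hx]
    exact zero_mem _
  · rintro _ ⟨y, rfl⟩
    exact ⟨y, by rw [pow_succ, Module.End.mul_apply]⟩
  · rintro x ⟨y, hy⟩
    refine Submodule.mem_sup.mpr ⟨x - f y, ?_, f y, ⟨y, rfl⟩, sub_add_cancel x (f y)⟩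
    rw [LinearMap.mem_ker, map_sub, ← hy, pow_succ, Module.End.mul_apply, sub_self]

theorem Module.End.finite_quotient_range (f : Module.End R M) (n : ℕ)
    [Module.Finite R (LinearMap.ker (f ^ n))]
    [Module.Finite R (LinearMap.range (f ^ n) ⧸
      (LinearMap.range (f ^ (n + 1))).comap (LinearMap.range (f ^ n)).subtype)] :
    Module.Finite R (M ⧸ LinearMap.range f) := by
  set Q := (LinearMap.range (f ^ (n + 1))).comap (LinearMap.range (f ^ n)).subtype
  let φ : M →ₗ[R] LinearMap.range (f ^ n) ⧸ Q := Q.mkQ ∘ₗ (f ^ n).rangeRestrict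
  have hkerφ : LinearMap.ker φ = LinearMap.ker (f ^ n) ⊔ LinearMap.range f := by
    rw [f.ker_pow_sup_range_eq_comap n, LinearMap.ker_comp, Submodule.ker_mkQ]
    ext x
    simp [Q]
  have hle : LinearMap.range f ≤ LinearMap.ker φ := hkerφ ▸ le_sup_right
  refine Module.Finite.of_exact (f := (LinearMap.range f).mkQ ∘ₗ (LinearMap.ker (f ^ n)).subtype)
    (g := (LinearMap.range f).liftQ φ hle) ?_ ?_
  · rw [LinearMap.exact_iff, Submodule.ker_liftQ, hkerφ, Submodule.map_sup, Submodule.mkQ_map_self,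
      sup_bot_eq, LinearMap.range_comp, Submodule.range_subtype]
  · refine Function.Surjective.of_comp (g := (LinearMap.range f).mkQ) ?_
    rw [← LinearMap.coe_comp, Submodule.liftQ_mkQ]
    exact (Submodule.mkQ_surjective Q).comp (f ^ n).surjective_rangeRestrict

end Ring

theorem Module.End.finiteDimensional_ker_pow {K V : Type*} [DivisionRing K] [AddCommGroup V]
    [Module K V] (f : Module.End K V) [FiniteDimensional K (LinearMap.ker f)] (n : ℕ) :
    FiniteDimensional K (LinearMap.ker (f ^ n)) := by
  induction n with
  | zero => rw [pow_zero, Module.End.one_eq_id, LinearMap.ker_id]; infer_instance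
  | succ n ih => rw [pow_succ, Module.End.mul_eq_comp, LinearMap.ker_comp]; infer_instance

theorem ContinuousLinearMap.isClosed_range_of_finiteDimensional_quotient {𝕜 E F : Type*}
    [NontriviallyNormedField 𝕜] [CompleteSpace 𝕜]
    [NormedAddCommGroup E] [NormedSpace 𝕜 E] [CompleteSpace E]
    [NormedAddCommGroup F] [NormedSpace 𝕜 F] [CompleteSpace F]
    (f : E →L[𝕜] F) [FiniteDimensional 𝕜 (F ⧸ LinearMap.range (f : E →ₗ[𝕜] F))] :
    IsClosed (LinearMap.range (f : E →ₗ[𝕜] F) : Set F) := by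
  set R := LinearMap.range (f : E →ₗ[𝕜] F)
  obtain ⟨G, hRG⟩ := Submodule.exists_isCompl R
  have : FiniteDimensional 𝕜 G := (R.quotientEquivOfIsCompl G hRG).finiteDimensional
  have : CompleteSpace G := FiniteDimensional.complete 𝕜 G
  let u : E × G →L[𝕜] F := f.coprod G.subtypeL
  have hu : Function.Surjective u := by
    refine (LinearMap.range_eq_top (f := (u : E × G →ₗ[𝕜] F))).mp ?_
    rw [ContinuousLinearMap.coe_coprod, LinearMap.range_coprod]
    simpa [R] using hRG.sup_eq_top
  have hpre : u ⁻¹' R = {p | (p.2 : F) = 0} := by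
    ext ⟨x, g⟩
    have hg : (g : F) ∈ R ↔ (g : F) = 0 :=
      ⟨fun h ↦ (Submodule.mem_bot 𝕜).mp (hRG.inf_eq_bot ▸ ⟨h, g.2⟩), fun h ↦ h ▸ R.zero_mem⟩
    change f x + g ∈ R ↔ (g : F) = 0
    exact (R.add_mem_iff_right ⟨x, rfl⟩).trans hg
  refine ((u.isOpenMap hu).isQuotientMap u.continuous hu).isClosed_preimage.mp ?_
  rw [hpre]
  exact isClosed_eq (continuous_subtype_val.comp continuous_snd) continuous_const

theorem IsBFredholm.isFredholm_of_finiteDimensional_ker {S : X →L[ℂ] X} (hS : IsBFredholm S)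
    (hker : FiniteDimensional ℂ (LinearMap.ker (S : X →ₗ[ℂ] X))) : IsFredholm S := by
  obtain ⟨n, -, -, -, hquot⟩ := hS
  rw [ContinuousLinearMap.toLinearMap_pow, ContinuousLinearMap.toLinearMap_pow] at hquot
  have := Module.End.finiteDimensional_ker_pow (S : X →ₗ[ℂ] X) n
  have := Module.End.finite_quotient_range (S : X →ₗ[ℂ] X) n
  exact ⟨hker, S.isClosed_range_of_finiteDimensional_quotient, this⟩

/-- If `E_a(T) ⊆ σ(T)\σ_bf(T)` then `E_a⁰(T) ⊆ σ(T)\σ_e(T)`. -/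
theorem stmt16 (T : X →L[ℂ] X) (h : Ea T ⊆ spectrum ℂ T \ sigma_bf T) :
    Ea0 T ⊆ spectrum ℂ T \ sigma_e T := by
  rintro l ⟨hiso, hne, hker⟩
  obtain ⟨hspec, hbf⟩ := h ⟨hiso, hne⟩
  exact ⟨hspec, fun hess ↦ hess ((not_not.mp hbf).isFredholm_of_finiteDimensional_ker hker)⟩
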